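/- Under assumption A1, suppose n ≥ 100 and τ = 1/(10√n). Let x ∈ F_p⁰ and μ > 0 satisfy δ(x, μ) ≤ 1/2, let z = (1/μ)X s(x,μ), and let x⁺ = X(2e − z + ψ_x) be the inexact primal IPM iterate with error vector ψ_x satisfying ‖ψ_x‖ ≤ 1/(40√(3n)). Then x⁺ ≥ 0.1·x componentwise (so x⁺ ∈ F_p⁰), and δ(x⁺, (1−τ)μ) ≤ 1/2. -/

import Mathlib

/-!
The minimizer `s = s(x, μ)` remains dual feasible, so it bounds `δ(x⁺, (1 - τ) μ)` from above.
With `z = X s / μ` one has `X⁺ s / ((1 - τ) μ) - e = (τ e - (z - e)² + z ∘ ψ) / (1 - τ)`: the Newton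
step squares the error `z - e`, whose norm is `δ(x, μ) ≤ 1/2`, and `τ e` contributes exactly `1/10`.
Componentwise `|zᵢ - 1| ≤ 1/2` and `|ψᵢ| ≤ ‖ψ‖` give `2 - zᵢ + ψᵢ ≥ 1/10`, hence `x⁺ ≥ x / 10`.
-/

open Matrix

noncomputable def euclidNorm {ι : Type*} [Fintype ι] (v : ι → ℝ) : ℝ :=
  Real.sqrt (∑ i, (v i) ^ 2)

noncomputable def opNorm {ι κ : Type*} [Fintype ι] [Fintype κ]
    (M : Matrix ι κ ℝ) : ℝ :=
  sSup {r : ℝ | ∃ v : κ → ℝ, euclidNorm v ≤ 1 ∧ r = euclidNorm (M *ᵥ v)}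

noncomputable def lambdaMin {ι : Type*} [Fintype ι] (M : Matrix ι ι ℝ) : ℝ :=
  sInf {r : ℝ | ∃ v : ι → ℝ, euclidNorm v = 1 ∧ r = v ⬝ᵥ (M *ᵥ v)}

noncomputable def lambdaMax {ι : Type*} [Fintype ι] (M : Matrix ι ι ℝ) : ℝ :=
  sSup {r : ℝ | ∃ v : ι → ℝ, euclidNorm v = 1 ∧ r = v ⬝ᵥ (M *ᵥ v)}

noncomputable def condNum {ι : Type*} [Fintype ι] (M : Matrix ι ι ℝ) : ℝ :=
  lambdaMax M / lambdaMin M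

noncomputable def gradProj {m n : ℕ} (B : Matrix (Fin m) (Fin n) ℝ) :
    Matrix (Fin n) (Fin n) ℝ :=
  1 - Bᵀ * (B * Bᵀ)⁻¹ * B

/-- The proximity measure `δ(x, μ) = ‖P_{AX}((1/μ) X c - e)‖`. -/
noncomputable def prox {m n : ℕ} (A : Matrix (Fin m) (Fin n) ℝ)
    (c x : Fin n → ℝ) (μ : ℝ) : ℝ :=
  euclidNorm (gradProj (A * Matrix.diagonal x) *ᵥ (μ⁻¹ • (Matrix.diagonal x *ᵥ c) - 1))

/-- The proximity measure as `min_{(y,s) ∈ F_d} ‖(1/μ) X s - e‖`. -/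
noncomputable def proxMin {m n : ℕ} (A : Matrix (Fin m) (Fin n) ℝ)
    (c x : Fin n → ℝ) (μ : ℝ) : ℝ :=
  sInf {r : ℝ | ∃ (y : Fin m → ℝ) (s : Fin n → ℝ),
    Aᵀ *ᵥ y + s = c ∧ (∀ i, 0 ≤ s i) ∧
    r = euclidNorm (μ⁻¹ • (Matrix.diagonal x *ᵥ s) - 1)}

/-- The primal normal matrix `A X² Aᵀ` is positive semidefinite. -/
theorem normalPSD {m n : ℕ} (A : Matrix (Fin m) (Fin n) ℝ) (x : Fin n → ℝ) :
    (A * Matrix.diagonal x ^ 2 * Aᵀ).PosSemidef := by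
  have h : A * Matrix.diagonal x ^ 2 * Aᵀ
      = (A * Matrix.diagonal x) * (A * Matrix.diagonal x)ᴴ := by
    rw [Matrix.conjTranspose_mul, Matrix.conjTranspose_eq_transpose_of_trivial,
      Matrix.conjTranspose_eq_transpose_of_trivial, Matrix.diagonal_transpose, pow_two,
      Matrix.mul_assoc, Matrix.mul_assoc, Matrix.mul_assoc]
  rw [h]
  exact Matrix.posSemidef_self_mul_conjTranspose _

section EuclidNorm

variable {ι : Type*} [Fintype ι]

lemma euclidNorm_eq_norm_toLp (v : ι → ℝ) : euclidNorm v = ‖WithLp.toLp 2 v‖ := by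
  simp [euclidNorm, EuclideanSpace.norm_eq]

lemma euclidNorm_nonneg (v : ι → ℝ) : 0 ≤ euclidNorm v := Real.sqrt_nonneg _

lemma euclidNorm_add_le (u v : ι → ℝ) : euclidNorm (u + v) ≤ euclidNorm u + euclidNorm v := by
  simpa only [euclidNorm_eq_norm_toLp, WithLp.toLp_add] using norm_add_le _ _

lemma euclidNorm_sub_le (u v : ι → ℝ) : euclidNorm (u - v) ≤ euclidNorm u + euclidNorm v := by
  simpa only [euclidNorm_eq_norm_toLp, WithLp.toLp_sub] using norm_sub_le _ _

lemma euclidNorm_smul (a : ℝ) (v : ι → ℝ) : euclidNorm (a • v) = |a| * euclidNorm v := by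
  simp only [euclidNorm_eq_norm_toLp, WithLp.toLp_smul, norm_smul, Real.norm_eq_abs]

lemma euclidNorm_one : euclidNorm (1 : ι → ℝ) = √(Fintype.card ι) := by
  simp [euclidNorm]

lemma abs_apply_le_euclidNorm (v : ι → ℝ) (i : ι) : |v i| ≤ euclidNorm v := by
  rw [← Real.sqrt_sq_eq_abs]
  exact Real.sqrt_le_sqrt (Finset.single_le_sum (fun j _ ↦ sq_nonneg (v j)) (Finset.mem_univ i))

lemma euclidNorm_mul_le_of_abs_le {u : ι → ℝ} {C : ℝ} (hu : ∀ i, |u i| ≤ C) (v : ι → ℝ) :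
    euclidNorm (u * v) ≤ C * euclidNorm v := by
  rcases isEmpty_or_nonempty ι with hι | ⟨⟨i⟩⟩
  · simp [euclidNorm]
  have hC : 0 ≤ C := (abs_nonneg _).trans (hu i)
  calc euclidNorm (u * v) ≤ euclidNorm (C • v) := by
        refine Real.sqrt_le_sqrt (Finset.sum_le_sum fun j _ ↦ ?_)
        simp only [Pi.mul_apply, Pi.smul_apply, smul_eq_mul, mul_pow]
        exact mul_le_mul_of_nonneg_right (sq_le_sq' (abs_le.mp (hu j)).1 (abs_le.mp (hu j)).2)
          (sq_nonneg _)
    _ = C * euclidNorm v := by rw [euclidNorm_smul, abs_of_nonneg hC]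

end EuclidNorm

section ProxMin

variable {m n : ℕ} {A : Matrix (Fin m) (Fin n) ℝ} {c x : Fin n → ℝ} {μ : ℝ}

lemma proxMin_le {y : Fin m → ℝ} {s : Fin n → ℝ} (hfeas : Aᵀ *ᵥ y + s = c)
    (hs : ∀ i, 0 ≤ s i) : proxMin A c x μ ≤ euclidNorm (μ⁻¹ • (diagonal x *ᵥ s) - 1) :=
  csInf_le ⟨0, by rintro r ⟨_, _, _, _, rfl⟩; exact euclidNorm_nonneg _⟩ ⟨y, s, hfeas, hs, rfl⟩

lemma proxMin_eq_of_isMinimizer {y : Fin m → ℝ} {s : Fin n → ℝ} (hfeas : Aᵀ *ᵥ y + s = c)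
    (hs : ∀ i, 0 ≤ s i)
    (hmin : ∀ (y' : Fin m → ℝ) (s' : Fin n → ℝ), Aᵀ *ᵥ y' + s' = c → (∀ i, 0 ≤ s' i) →
      euclidNorm (μ⁻¹ • (diagonal x *ᵥ s) - 1) ≤ euclidNorm (μ⁻¹ • (diagonal x *ᵥ s') - 1)) :
    proxMin A c x μ = euclidNorm (μ⁻¹ • (diagonal x *ᵥ s) - 1) :=
  le_antisymm (proxMin_le hfeas hs) <| le_csInf ⟨_, y, s, hfeas, hs, rfl⟩ <| by
    rintro r ⟨y', s', hfeas', hs', rfl⟩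
    exact hmin y' s' hfeas' hs'

end ProxMin

section Step

variable {ι : Type*} [Fintype ι]

lemma inv_smul_diagonal_iterate_mulVec_sub_one [DecidableEq ι] {x s z ψ : ι → ℝ} {μ τ : ℝ}
    (hμ : μ ≠ 0) (hτ : τ ≠ 1) (hz : z = μ⁻¹ • (diagonal x *ᵥ s)) :
    ((1 - τ) * μ)⁻¹ • (diagonal (diagonal x *ᵥ ((2 : ℝ) • 1 - z + ψ)) *ᵥ s) - 1
      = (1 - τ)⁻¹ • (τ • 1 - (z - 1) * (z - 1) + z * ψ) := by
  have h1τ : 1 - τ ≠ 0 := sub_ne_zero.mpr hτ.symm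
  funext i
  simp only [hz, mulVec_diagonal, Pi.sub_apply, Pi.add_apply, Pi.mul_apply, Pi.smul_apply,
    Pi.one_apply, smul_eq_mul]
  field_simp
  ring

lemma euclidNorm_step_residual_le (z ψ : ι → ℝ) {τ : ℝ} (hτ : 0 ≤ τ) :
    euclidNorm (τ • 1 - (z - 1) * (z - 1) + z * ψ)
      ≤ τ * √(Fintype.card ι) + euclidNorm (z - 1) ^ 2 + (1 + euclidNorm (z - 1)) * euclidNorm ψ := by
  have hz : ∀ i, |(z - 1) i| ≤ euclidNorm (z - 1) := abs_apply_le_euclidNorm _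
  have hz' : ∀ i, |z i| ≤ 1 + euclidNorm (z - 1) := fun i ↦ by
    have := (abs_sub_abs_le_abs_sub (z i) 1).trans (hz i)
    rw [abs_one] at this
    linarith
  calc euclidNorm (τ • 1 - (z - 1) * (z - 1) + z * ψ)
      ≤ euclidNorm (τ • (1 : ι → ℝ)) + euclidNorm ((z - 1) * (z - 1)) + euclidNorm (z * ψ) := by
        linarith [euclidNorm_add_le (τ • 1 - (z - 1) * (z - 1)) (z * ψ),
          euclidNorm_sub_le (τ • (1 : ι → ℝ)) ((z - 1) * (z - 1))]
    _ ≤ _ := by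
        rw [euclidNorm_smul, euclidNorm_one, abs_of_nonneg hτ, sq]
        gcongr
        · exact euclidNorm_mul_le_of_abs_le hz _
        · exact euclidNorm_mul_le_of_abs_le hz' _

end Step

lemma one_tenth_mul_le_mul_two_sub_add {x z ψ : ℝ} (hx : 0 ≤ x) (hz : |z - 1| ≤ 1 / 2)
    (hψ : |ψ| ≤ 2 / 5) : 0.1 * x ≤ x * (2 - z + ψ) := by
  have := abs_le.mp hz
  have := abs_le.mp hψ
  nlinarith

lemma one_div_forty_mul_sqrt_three_mul_le {n : ℝ} (hn : 100 ≤ n) :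
    1 / (40 * √(3 * n)) ≤ 1 / 680 := by
  have h17 : 17 ≤ √(3 * n) := (Real.le_sqrt (by norm_num) (by positivity)).mpr (by linarith)
  exact one_div_le_one_div_of_le (by norm_num) (by linarith)

theorem stmt_14_general {m n : ℕ} (A : Matrix (Fin m) (Fin n) ℝ) (c : Fin n → ℝ)
    (hn : 100 ≤ n)
    (τ : ℝ) (hτ : τ = 1 / (10 * Real.sqrt n))
    (x : Fin n → ℝ) (hxpos : ∀ i, 0 < x i)
    (μ : ℝ) (hμ : 0 < μ)
    (hδ : proxMin A c x μ ≤ 1 / 2)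
    -- the projected dual solution s(x, μ) attaining δ(x, μ)
    (ysol : Fin m → ℝ) (ssol : Fin n → ℝ)
    (hsolfeas : Aᵀ *ᵥ ysol + ssol = c) (hsolnn : ∀ i, 0 ≤ ssol i)
    (hsolmin : ∀ (y' : Fin m → ℝ) (s' : Fin n → ℝ), Aᵀ *ᵥ y' + s' = c → (∀ i, 0 ≤ s' i) →
      euclidNorm (μ⁻¹ • (Matrix.diagonal x *ᵥ ssol) - 1)
        ≤ euclidNorm (μ⁻¹ • (Matrix.diagonal x *ᵥ s') - 1))
    (zvec : Fin n → ℝ) (hzvec : zvec = μ⁻¹ • (Matrix.diagonal x *ᵥ ssol))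
    -- the inexact iterate with error vector ψ_x
    (ψx : Fin n → ℝ) (hψx : euclidNorm ψx ≤ 1 / (40 * Real.sqrt (3 * n)))
    (xplus : Fin n → ℝ)
    (hxplus : xplus = Matrix.diagonal x *ᵥ ((2 : ℝ) • (1 : Fin n → ℝ) - zvec + ψx)) :
    (∀ i, 0.1 * x i ≤ xplus i) ∧ (∀ i, 0 < xplus i) ∧
    proxMin A c xplus ((1 - τ) * μ) ≤ 1 / 2 := by
  have hn' : (100 : ℝ) ≤ n := by exact_mod_cast hn
  have hsqrt : 10 ≤ √(n : ℝ) := (Real.le_sqrt (by norm_num) (by positivity)).mpr (by linarith)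
  have hτn : τ * √(n : ℝ) = 1 / 10 := by rw [hτ]; field_simp
  have hτ0 : 0 ≤ τ := by rw [hτ]; positivity
  have hτ1 : τ ≤ 1 / 100 := by nlinarith
  have hψ : euclidNorm ψx ≤ 1 / 680 := hψx.trans (one_div_forty_mul_sqrt_three_mul_le hn')
  have hz : euclidNorm (zvec - 1) ≤ 1 / 2 := by
    rwa [hzvec, ← proxMin_eq_of_isMinimizer hsolfeas hsolnn hsolmin]
  have hlow : ∀ i, 0.1 * x i ≤ xplus i := fun i ↦ by
    have hzi := (abs_apply_le_euclidNorm (zvec - 1) i).trans hz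
    simpa [hxplus, mulVec_diagonal] using one_tenth_mul_le_mul_two_sub_add (hxpos i).le hzi
      (by linarith [(abs_apply_le_euclidNorm ψx i).trans hψ])
  refine ⟨hlow, fun i ↦ by linarith [hlow i, hxpos i], ?_⟩
  have h1τ : 0 < (1 - τ)⁻¹ := inv_pos.mpr (by linarith)
  calc proxMin A c xplus ((1 - τ) * μ)
      ≤ (1 - τ)⁻¹ * euclidNorm (τ • 1 - (zvec - 1) * (zvec - 1) + zvec * ψx) := by
        refine (proxMin_le hsolfeas hsolnn).trans_eq ?_
        rw [hxplus, inv_smul_diagonal_iterate_mulVec_sub_one hμ.ne' (by linarith) hzvec,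
          euclidNorm_smul, abs_of_pos h1τ]
    _ ≤ (1 - τ)⁻¹ * (1 / 10 + (1 / 2) ^ 2 + (1 + 1 / 2) * (1 / 680)) := by
        have := euclidNorm_nonneg (zvec - 1)
        have := euclidNorm_nonneg ψx
        grw [euclidNorm_step_residual_le _ _ hτ0, Fintype.card_fin, hτn, hz, hψ]
    _ ≤ 1 / 2 := by
        rw [inv_mul_le_iff₀ (by linarith)]
        linarith

/-- one step of the inexact primal IPM keeps the iterate strictly
feasible and within the `1/2`-proximity region after the barrier update. -/
theorem stmt_14 {m n : ℕ} (A : Matrix (Fin m) (Fin n) ℝ) (b : Fin m → ℝ) (c : Fin n → ℝ)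
    (hn : 100 ≤ n)
    -- Assumption A1: nonempty primal and dual interiors, full row rank
    (hrank : A.rank = m)
    (hFp0 : ∃ x0 : Fin n → ℝ, A *ᵥ x0 = b ∧ ∀ i, 0 < x0 i)
    (hFd0 : ∃ (y0 : Fin m → ℝ) (s0 : Fin n → ℝ), Aᵀ *ᵥ y0 + s0 = c ∧ ∀ i, 0 < s0 i)
    (τ : ℝ) (hτ : τ = 1 / (10 * Real.sqrt n))
    (x : Fin n → ℝ) (hxfeas : A *ᵥ x = b) (hxpos : ∀ i, 0 < x i)
    (μ : ℝ) (hμ : 0 < μ)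
    (hδ : proxMin A c x μ ≤ 1 / 2)
    -- the projected dual solution s(x, μ) attaining δ(x, μ)
    (ysol : Fin m → ℝ) (ssol : Fin n → ℝ)
    (hsolfeas : Aᵀ *ᵥ ysol + ssol = c) (hsolnn : ∀ i, 0 ≤ ssol i)
    (hsolmin : ∀ (y' : Fin m → ℝ) (s' : Fin n → ℝ), Aᵀ *ᵥ y' + s' = c → (∀ i, 0 ≤ s' i) →
      euclidNorm (μ⁻¹ • (Matrix.diagonal x *ᵥ ssol) - 1)
        ≤ euclidNorm (μ⁻¹ • (Matrix.diagonal x *ᵥ s') - 1))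
    (zvec : Fin n → ℝ) (hzvec : zvec = μ⁻¹ • (Matrix.diagonal x *ᵥ ssol))
    -- the inexact iterate with error vector ψ_x
    (ψx : Fin n → ℝ) (hψx : euclidNorm ψx ≤ 1 / (40 * Real.sqrt (3 * n)))
    (xplus : Fin n → ℝ)
    (hxplus : xplus = Matrix.diagonal x *ᵥ ((2 : ℝ) • (1 : Fin n → ℝ) - zvec + ψx))
    (hplusfeas : A *ᵥ xplus = b) :
    (∀ i, 0.1 * x i ≤ xplus i) ∧ (∀ i, 0 < xplus i) ∧
    proxMin A c xplus ((1 - τ) * μ) ≤ 1 / 2 :=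
  stmt_14_general A c hn τ hτ x hxpos μ hμ hδ ysol ssol hsolfeas hsolnn hsolmin zvec hzvec ψx hψx
    xplus hxplus
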